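/- (Corollary of Theorem 1) The feasible set of problem (III) is nonempty if and only if the feasible set of problem (III′) is nonempty, and the infimum of the (III)-objective over the feasible set of (III) equals the infimum of the (III′)-objective over the feasible set of (III′). -/

import Mathlib

/-- Feasibility for problem (III): constraints (IIa), (IIb), (IIc), (IId), (IIf), (IIg)
and the lower bound on `t`. -/
def FeasIII {V : Type*} (E : Finset (V × V)) (T Nbar : ℝ) (w : V × V → ℝ)
    (R r s : V → ℝ) (t : V × V → ℝ) : Prop :=
  (∀ i, s i ≤ R i - r i) ∧
  (∀ i, R i - r i ≤ T) ∧
  (∀ e ∈ E, -(T * w e) ≤ r e.2 - r e.1) ∧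
  (∀ i, 0 ≤ R i ∧ R i ≤ Nbar) ∧
  (∀ i, 0 ≤ r i ∧ r i ≤ Nbar) ∧
  (∀ i, 0 ≤ s i ∧ s i ≤ T) ∧
  (∀ e ∈ E, t e ≤ R e.2 - R e.1) ∧
  (∀ e ∈ E, -(T * w e) ≤ t e)

/-- Feasibility for problem (III′): constraints (IIc), (IId), (IIf), (IIg),
the lower bound on `t`, and the equality `R̄ i - r̄ i = s̄ i`. -/
def FeasIII' {V : Type*} (E : Finset (V × V)) (T Nbar : ℝ) (w : V × V → ℝ)
    (R r s : V → ℝ) (t : V × V → ℝ) : Prop :=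
  (∀ e ∈ E, -(T * w e) ≤ r e.2 - r e.1) ∧
  (∀ i, 0 ≤ R i ∧ R i ≤ Nbar) ∧
  (∀ i, 0 ≤ r i ∧ r i ≤ Nbar) ∧
  (∀ i, 0 ≤ s i ∧ s i ≤ T) ∧
  (∀ e ∈ E, t e ≤ R e.2 - R e.1) ∧
  (∀ e ∈ E, -(T * w e) ≤ t e) ∧
  (∀ i, R i - r i = s i)

/-- Objective value `∑ i, G i (s i) + ∑ (i,j) ∈ E, Pe (i,j) (t (i,j))`
for a vertex cost family `G` and edge cost family `Pe`. -/
def objFn {V : Type*} [Fintype V] (E : Finset (V × V)) (G : V → ℝ → ℝ)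
    (Pe : V × V → ℝ → ℝ) (s : V → ℝ) (t : V × V → ℝ) : ℝ :=
  ∑ i, G i (s i) + ∑ e ∈ E, Pe e (t e)

/-- The envelope `Q i (x) = P i (min x (sstar i))`, i.e. `Q i x = P i x` for
`x ≤ sstar i` and `Q i x = P i (sstar i)` for `x > sstar i`. -/
def Qfun {V : Type*} (P : V → ℝ → ℝ) (sstar : V → ℝ) (i : V) (x : ℝ) : ℝ :=
  P i (min x (sstar i))

/-!
Replacing `s̄` by `R̄ - r̄` turns a feasible point of (III) into one of (III′), and since a convex
`P i` is nonincreasing to the left of its minimiser `s_i*`, this does not increase the objective: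
`Q i (R̄ i - r̄ i) ≤ P i (s̄ i)`. Conversely, from a feasible point of (III′) the choice
`s̄ i := min (s̄ i) (s_i*)` gives a feasible point of (III) whose (III)-objective is the
(III′)-objective of the original point. So each value set dominates the other from below, and
their infima coincide (also when they are empty or unbounded, where `sInf` is `0` on both sides).
-/

open Set

theorem ConvexOn.antitoneOn_inter_Iic_of_isMinOn {𝕜 β : Type*} [Field 𝕜] [LinearOrder 𝕜]
    [IsStrictOrderedRing 𝕜] [AddCommMonoid β] [LinearOrder β] [IsOrderedAddMonoid β]
    [Module 𝕜 β] [PosSMulStrictMono 𝕜 β] {s : Set 𝕜} {f : 𝕜 → β} {x₀ : 𝕜}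
    (hf : ConvexOn 𝕜 s f) (hmin : IsMinOn f s x₀) (hx₀ : x₀ ∈ s) :
    AntitoneOn f (s ∩ Iic x₀) := by
  rintro a ⟨ha, -⟩ b ⟨-, hb⟩ hab
  have hb_seg : b ∈ segment 𝕜 a x₀ := by
    rw [segment_eq_Icc (hab.trans hb)]
    exact ⟨hab, hb⟩
  calc f b ≤ max (f a) (f x₀) := hf.le_on_segment ha hx₀ hb_seg
    _ = f a := max_eq_left (hmin ha)

theorem ConvexOn.le_of_le_of_isMinOn_univ {f : ℝ → ℝ} {x₀ x y : ℝ}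
    (hf : ConvexOn ℝ univ f) (hmin : IsMinOn f univ x₀) (hyx : y ≤ x) :
    f (min x x₀) ≤ f y := by
  rcases le_total x x₀ with hx | hx
  · rw [min_eq_left hx]
    exact hf.antitoneOn_inter_Iic_of_isMinOn hmin (mem_univ x₀)
      ⟨mem_univ y, hyx.trans hx⟩ ⟨mem_univ x, hx⟩ hyx
  · rw [min_eq_right hx]
    exact hmin (mem_univ y)

section Feasibility

variable {V : Type*} {E : Finset (V × V)} {T Nbar : ℝ} {w : V × V → ℝ}
  {R r s : V → ℝ} {t : V × V → ℝ}

theorem FeasIII.feasIII'_sub (h : FeasIII E T Nbar w R r s t) :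
    FeasIII' E T Nbar w R r (fun i => R i - r i) t := by
  obtain ⟨hsR, hRT, hr, hR, hr', hs, ht, ht'⟩ := h
  exact ⟨hr, hR, hr', fun i => ⟨(hs i).1.trans (hsR i), hRT i⟩, ht, ht', fun _ => rfl⟩

theorem FeasIII'.feasIII_min {c : V → ℝ} (h : FeasIII' E T Nbar w R r s t) (hc : ∀ i, 0 ≤ c i) :
    FeasIII E T Nbar w R r (fun i => min (s i) (c i)) t := by
  obtain ⟨hr, hR, hr', hs, ht, ht', hRs⟩ := h
  refine ⟨fun i => ?_, fun i => ?_, hr, hR, hr', fun i => ?_, ht, ht'⟩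
  · exact (hRs i).symm ▸ min_le_left _ _
  · exact (hRs i).symm ▸ (hs i).2
  · exact ⟨le_min (hs i).1 (hc i), (min_le_left _ _).trans (hs i).2⟩

end Feasibility

theorem objFn_Qfun_le {V : Type*} [Fintype V] {E : Finset (V × V)} {P : V → ℝ → ℝ}
    {sstar : V → ℝ} (hPconv : ∀ i, ConvexOn ℝ univ (P i))
    (hmin : ∀ i x, P i (sstar i) ≤ P i x) {Pe : V × V → ℝ → ℝ} {s s' : V → ℝ}
    {t : V × V → ℝ} (hss' : ∀ i, s i ≤ s' i) :
    objFn E (Qfun P sstar) Pe s' t ≤ objFn E P Pe s t := by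
  unfold objFn Qfun
  gcongr with i
  exact (hPconv i).le_of_le_of_isMinOn_univ (fun x _ => hmin i x) (hss' i)

theorem theorem1_corollary_general
    (V : Type*) [Fintype V]
    (E : Finset (V × V))
    (T Nbar : ℝ)
    (w : V × V → ℝ)
    (P : V → ℝ → ℝ) (hPconv : ∀ i, ConvexOn ℝ Set.univ (P i))
    (sstar : V → ℝ) (hmin : ∀ i x, P i (sstar i) ≤ P i x)
    (hs0 : ∀ i, 0 ≤ sstar i)
    (Pe : V × V → ℝ → ℝ) :
    ((∃ R r s t, FeasIII E T Nbar w R r s t) ↔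
      (∃ R r s t, FeasIII' E T Nbar w R r s t)) ∧
    sInf {y : ℝ | ∃ R r s t, FeasIII E T Nbar w R r s t ∧ objFn E P Pe s t = y} =
      sInf {y : ℝ | ∃ R r s t, FeasIII' E T Nbar w R r s t ∧
        objFn E (Qfun P sstar) Pe s t = y} := by
  refine ⟨⟨fun ⟨R, r, _, t, h⟩ => ⟨R, r, _, t, h.feasIII'_sub⟩,
    fun ⟨R, r, _, t, h⟩ => ⟨R, r, _, t, h.feasIII_min hs0⟩⟩,
    csInf_eq_csInf_of_forall_exists_le ?_ ?_⟩
  · rintro _ ⟨R, r, s, t, h, rfl⟩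
    exact ⟨_, ⟨R, r, _, t, h.feasIII'_sub, rfl⟩, objFn_Qfun_le hPconv hmin h.1⟩
  · rintro _ ⟨R, r, s, t, h, rfl⟩
    exact ⟨_, ⟨R, r, _, t, h.feasIII_min hs0, rfl⟩, le_rfl⟩

/-- Corollary of Theorem 1: the feasible set of (III) is nonempty iff the feasible
set of (III′) is nonempty, and the infimum of the (III)-objective over the feasible
set of (III) equals the infimum of the (III′)-objective over the feasible set of (III′). -/
theorem theorem1_corollary
    (V : Type*) [Fintype V]
    (E : Finset (V × V))
    (T Nbar : ℝ) (hT : 0 < T) (hN : 0 ≤ Nbar)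
    (w : V × V → ℝ) (hw : ∀ e ∈ E, 0 ≤ w e)
    (P : V → ℝ → ℝ) (hPconv : ∀ i, ConvexOn ℝ Set.univ (P i))
    (sstar : V → ℝ) (hmin : ∀ i x, P i (sstar i) ≤ P i x)
    (hs0 : ∀ i, 0 ≤ sstar i) (hsT : ∀ i, sstar i ≤ T)
    (Pe : V × V → ℝ → ℝ) :
    ((∃ R r s t, FeasIII E T Nbar w R r s t) ↔
      (∃ R r s t, FeasIII' E T Nbar w R r s t)) ∧
    sInf {y : ℝ | ∃ R r s t, FeasIII E T Nbar w R r s t ∧ objFn E P Pe s t = y} =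
      sInf {y : ℝ | ∃ R r s t, FeasIII' E T Nbar w R r s t ∧
        objFn E (Qfun P sstar) Pe s t = y} :=
  theorem1_corollary_general V E T Nbar w P hPconv sstar hmin hs0 Pe
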